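/- Let a ∈ ℝ^n, let ℓ : {−1,1}^n → ℝ be ℓ(x) = Σ_{i=1}^n a_i x_i, and let B = { x ∈ {−1,1}^n : ℓ(x) ≥ 0 }. Then E[ ℓ(X) 1_B(X) ] ≥ ‖a‖₂ / 40, where X is uniform on {−1,1}^n and ‖a‖₂ = (Σ_i a_i²)^{1/2}. -/
import Mathlib


open Real

/-- The `±1` value of a boolean coordinate. -/
noncomputable def bval (b : Bool) : ℝ := if b then 1 else -1

/-- Expectation with respect to the uniform measure on the discrete cube `{-1,1}^n`. -/
noncomputable def bExp (n : ℕ) (f : (Fin n → Bool) → ℝ) : ℝ :=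
  (∑ x : Fin n → Bool, f x) / 2 ^ n

/-- Covariance on the discrete cube. -/
noncomputable def bCov (n : ℕ) (f g : (Fin n → Bool) → ℝ) : ℝ :=
  bExp n (fun x => (f x - bExp n f) * (g x - bExp n g))

/-- Variance on the discrete cube. -/
noncomputable def bVar (n : ℕ) (f : (Fin n → Bool) → ℝ) : ℝ := bCov n f f

/-- The character `χ_S(x) = ∏_{i ∈ S} x_i`. -/
noncomputable def chi (n : ℕ) (S : Finset (Fin n)) (x : Fin n → Bool) : ℝ :=
  ∏ i ∈ S, bval (x i)

/-- The Fourier coefficient `f̂(S) = E[f χ_S]`. -/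
noncomputable def fourierCoef (n : ℕ) (f : (Fin n → Bool) → ℝ) (S : Finset (Fin n)) : ℝ :=
  bExp n (fun x => f x * chi n S x)

/-- The Bonami--Beckner semigroup `P_t f = Σ_S e^{-t|S|} f̂(S) χ_S`. -/
noncomputable def bP (n : ℕ) (t : ℝ) (f : (Fin n → Bool) → ℝ) : (Fin n → Bool) → ℝ :=
  fun x => ∑ S : Finset (Fin n), Real.exp (-t * S.card) * fourierCoef n f S * chi n S x

/-- A half-space `{x : ⟨a, x⟩ ≤ b}` in `{-1,1}^n`. -/
def IsHalfspaceB {n : ℕ} (A : Set (Fin n → Bool)) : Prop :=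
  ∃ (a : Fin n → ℝ) (b : ℝ), A = {x | ∑ i, a i * bval (x i) ≤ b}

/-- `M(g)`: the supremum over half-spaces `A` of `Cov(g, 1_A)`. -/
noncomputable def Mb (n : ℕ) (g : (Fin n → Bool) → ℝ) : ℝ :=
  ⨆ A : {A : Set (Fin n → Bool) // IsHalfspaceB A}, bCov n g (Set.indicator A.1 1)

/-- `z ⊘ x`: coordinates where `z` is `none` (i.e. 0) are filled in by `x`. -/
def oslash {n : ℕ} (z : Fin n → Option Bool) (x : Fin n → Bool) : Fin n → Bool :=
  fun i => (z i).getD (x i)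

/-- The restriction `f_z(x) = f(z ⊘ x)`. -/
noncomputable def restrictF {n : ℕ} (f : (Fin n → Bool) → ℝ) (z : Fin n → Option Bool) :
    (Fin n → Bool) → ℝ := fun x => f (oslash z x)

/-- The `μ_s`-probability of the restriction pattern `z ∈ {-1,0,1}^n`: each coordinate is
independently `0` (here `none`) with probability `e^{-s}`, and `±1` with probability
`(1-e^{-s})/2` each. -/
noncomputable def muWeight (n : ℕ) (s : ℝ) (z : Fin n → Option Bool) : ℝ :=
  ∏ i, if z i = none then Real.exp (-s) else (1 - Real.exp (-s)) / 2

/-- Expectation over a random restriction `Z ∼ μ_s`. -/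
noncomputable def restExp (n : ℕ) (s : ℝ) (g : (Fin n → Option Bool) → ℝ) : ℝ :=
  ∑ z : Fin n → Option Bool, muWeight n s z * g z

/-- `w₁(f) = Σ_i f̂({i})²`. -/
noncomputable def w1b (n : ℕ) (f : (Fin n → Bool) → ℝ) : ℝ :=
  ∑ i : Fin n, (fourierCoef n f {i}) ^ 2

/-- The boolean version of the ball example: `n = m²`, the coordinates are split into `m`
consecutive blocks `J_i = {j : j / m = i}` of size `m`, and
`B^{(m)} = {x : Σ_i (m^{-1/2} Σ_{j ∈ J_i} x_j)² ≤ m}`. -/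
noncomputable def Bm (m : ℕ) : Set (Fin (m*m) → Bool) :=
  {x | ∑ i : Fin m,
    ((∑ j : Fin (m*m), if (j : ℕ) / m = (i : ℕ) then bval (x j) else 0) / Real.sqrt m) ^ 2
      ≤ (m : ℝ)}

namespace Stmt15Aux

noncomputable def L (n : ℕ) (a : Fin n → ℝ) (x : Fin n → Bool) : ℝ := ∑ i, a i * bval (x i)

lemma cube_sum_succ (n : ℕ) (f : (Fin (n+1) → Bool) → ℝ) :
    ∑ x : Fin (n+1) → Bool, f x =
      ∑ y : Fin n → Bool, (f (Fin.cons true y) + f (Fin.cons false y)) := by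
  rw [← (Fin.consEquiv (fun _ => Bool)).sum_comp f, Fintype.sum_prod_type]
  rw [Fintype.sum_bool, ← Finset.sum_add_distrib]
  rfl

lemma L_cons (n : ℕ) (a : Fin (n+1) → ℝ) (b : Bool) (y : Fin n → Bool) :
    L (n+1) a (Fin.cons b y) = a 0 * bval b + L n (fun i : Fin n => a i.succ) y := by
  simp [L, Fin.sum_univ_succ]

lemma card_cube (n : ℕ) : (Finset.univ : Finset (Fin n → Bool)).card = 2 ^ n := by
  simp [Finset.card_univ]

lemma M1 (n : ℕ) (a : Fin n → ℝ) : ∑ x : Fin n → Bool, L n a x = 0 := by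
  induction n with
  | zero => simp [L]
  | succ n ih =>
      rw [cube_sum_succ]
      have : ∀ y : Fin n → Bool,
          L (n+1) a (Fin.cons true y) + L (n+1) a (Fin.cons false y)
            = 2 * L n (fun i : Fin n => a i.succ) y := by
        intro y; rw [L_cons, L_cons]; simp [bval]; ring
      simp_rw [this]
      rw [← Finset.mul_sum, ih]
      ring

lemma M2 (n : ℕ) (a : Fin n → ℝ) :
    ∑ x : Fin n → Bool, (L n a x) ^ 2 = 2 ^ n * ∑ i, a i ^ 2 := by
  induction n with
  | zero => simp [L]
  | succ n ih =>
      rw [cube_sum_succ]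
      have : ∀ y : Fin n → Bool,
          L (n+1) a (Fin.cons true y) ^ 2 + L (n+1) a (Fin.cons false y) ^ 2
            = 2 * (L n (fun i : Fin n => a i.succ) y) ^ 2 + 2 * a 0 ^ 2 := by
        intro y; rw [L_cons, L_cons]; simp [bval]; ring
      simp_rw [this]
      rw [Finset.sum_add_distrib, ← Finset.mul_sum, ih (fun i : Fin n => a i.succ),
        Finset.sum_const, card_cube, Fin.sum_univ_succ]
      push_cast
      ring

lemma M4 (n : ℕ) (a : Fin n → ℝ) :
    ∑ x : Fin n → Bool, (L n a x) ^ 4 ≤ 3 * 2 ^ n * (∑ i, a i ^ 2) ^ 2 := by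
  induction n with
  | zero => simp [L]
  | succ n ih =>
      rw [cube_sum_succ]
      have hpt : ∀ y : Fin n → Bool,
          L (n+1) a (Fin.cons true y) ^ 4 + L (n+1) a (Fin.cons false y) ^ 4
            = 2 * (L n (fun i : Fin n => a i.succ) y) ^ 4
              + 12 * a 0 ^ 2 * (L n (fun i : Fin n => a i.succ) y) ^ 2 + 2 * a 0 ^ 4 := by
        intro y; rw [L_cons, L_cons]; simp [bval]; ring
      simp_rw [hpt]
      rw [Finset.sum_add_distrib, Finset.sum_add_distrib, ← Finset.mul_sum,
        ← Finset.mul_sum, M2 n (fun i : Fin n => a i.succ), Finset.sum_const, card_cube,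
        Fin.sum_univ_succ]
      have ihs := ih (fun i : Fin n => a i.succ)
      have hs : (0:ℝ) ≤ ∑ i : Fin n, a i.succ ^ 2 := Finset.sum_nonneg fun _ _ => sq_nonneg _
      have hN : (0:ℝ) < 2 ^ n := by positivity
      rw [nsmul_eq_mul, pow_succ (2:ℝ) n]
      push_cast
      nlinarith [sq_nonneg (a 0), sq_nonneg (a 0 ^ 2), mul_nonneg hN.le (sq_nonneg (a 0 ^ 2)),
        mul_nonneg hN.le (mul_nonneg (sq_nonneg (a 0)) hs)]

end Stmt15Aux

namespace Stmt15Aux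

lemma CS1 (n : ℕ) (a : Fin n → ℝ) :
    (∑ x : Fin n → Bool, (L n a x) ^ 2) ^ 2 ≤
      (∑ x : Fin n → Bool, |L n a x|) * (∑ x : Fin n → Bool, |L n a x| ^ 3) := by
  have h := Finset.sum_mul_sq_le_sq_mul_sq Finset.univ
    (fun x : Fin n → Bool => Real.sqrt |L n a x|)
    (fun x : Fin n → Bool => |L n a x| * Real.sqrt |L n a x|)
  have e1 : ∀ x : Fin n → Bool,
      Real.sqrt |L n a x| * (|L n a x| * Real.sqrt |L n a x|) = (L n a x) ^ 2 := by
    intro x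
    rw [show Real.sqrt |L n a x| * (|L n a x| * Real.sqrt |L n a x|)
        = (Real.sqrt |L n a x| * Real.sqrt |L n a x|) * |L n a x| by ring,
      Real.mul_self_sqrt (abs_nonneg _), abs_mul_abs_self, sq]
  have e2 : ∀ x : Fin n → Bool, (Real.sqrt |L n a x|) ^ 2 = |L n a x| :=
    fun x => Real.sq_sqrt (abs_nonneg _)
  have e3 : ∀ x : Fin n → Bool,
      (|L n a x| * Real.sqrt |L n a x|) ^ 2 = |L n a x| ^ 3 := by
    intro x
    rw [mul_pow, Real.sq_sqrt (abs_nonneg _)]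
    ring
  simp_rw [e1, e2, e3] at h
  exact h

lemma CS2 (n : ℕ) (a : Fin n → ℝ) :
    (∑ x : Fin n → Bool, |L n a x| ^ 3) ^ 2 ≤
      (∑ x : Fin n → Bool, (L n a x) ^ 2) * (∑ x : Fin n → Bool, (L n a x) ^ 4) := by
  have h := Finset.sum_mul_sq_le_sq_mul_sq Finset.univ
    (fun x : Fin n → Bool => |L n a x|)
    (fun x : Fin n → Bool => (L n a x) ^ 2)
  have e1 : ∀ x : Fin n → Bool, |L n a x| * (L n a x) ^ 2 = |L n a x| ^ 3 := by
    intro x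
    rw [← sq_abs]
    ring
  have e2 : ∀ x : Fin n → Bool, |L n a x| ^ 2 = (L n a x) ^ 2 := fun x => sq_abs _
  have e3 : ∀ x : Fin n → Bool, ((L n a x) ^ 2) ^ 2 = (L n a x) ^ 4 := by
    intro x; ring
  simp_rw [e1, e2, e3] at h
  exact h

lemma key (n : ℕ) (a : Fin n → ℝ) :
    Real.sqrt (∑ i, a i ^ 2) * 2 ^ n ≤ 20 * ∑ x : Fin n → Bool, |L n a x| := by
  set s := ∑ i, a i ^ 2 with hsdef
  have hs0 : 0 ≤ s := Finset.sum_nonneg fun _ _ => sq_nonneg _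
  set N : ℝ := 2 ^ n with hNdef
  have hN : (0:ℝ) < N := by positivity
  set T1 := ∑ x : Fin n → Bool, |L n a x| with hT1
  set T3 := ∑ x : Fin n → Bool, |L n a x| ^ 3 with hT3
  have hT10 : 0 ≤ T1 := Finset.sum_nonneg fun _ _ => abs_nonneg _
  have hT30 : 0 ≤ T3 := Finset.sum_nonneg fun _ _ => pow_nonneg (abs_nonneg _) _
  rcases eq_or_lt_of_le hs0 with h0 | hs
  · rw [← h0]
    simp
    positivity
  · have h1 := CS1 n a
    have h2 := CS2 n a
    rw [M2 n a] at h1 h2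
    have h4 := M4 n a
    -- combine: (N*s)^4 ≤ (T1*T3)^2 ≤ T1^2 * (N*s * (3*N*s^2))
    have hc1 : (N * s) ^ 4 ≤ (T1 * T3) ^ 2 := by
      calc (N * s) ^ 4 = ((N * s) ^ 2) ^ 2 := by ring
        _ ≤ (T1 * T3) ^ 2 := by
            apply pow_le_pow_left₀ (sq_nonneg _)
            exact h1
    have hc2 : (T1 * T3) ^ 2 ≤ T1 ^ 2 * (N * s * (3 * N * s ^ 2)) := by
      have : T3 ^ 2 ≤ N * s * (3 * N * s ^ 2) := by
        calc T3 ^ 2 ≤ N * s * ∑ x : Fin n → Bool, (L n a x) ^ 4 := h2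
          _ ≤ N * s * (3 * N * s ^ 2) := by
              apply mul_le_mul_of_nonneg_left h4 (by positivity)
      calc (T1 * T3) ^ 2 = T1 ^ 2 * T3 ^ 2 := by ring
        _ ≤ T1 ^ 2 * (N * s * (3 * N * s ^ 2)) :=
            mul_le_mul_of_nonneg_left this (sq_nonneg _)
    -- so N^4 s^4 ≤ 3 T1^2 N^2 s^3, hence s * N^2 ≤ 3 T1^2 ... divide by s^3 N^2
    have hdiv : s * N ^ 2 ≤ 400 * T1 ^ 2 := by
      have hpos : 0 < s ^ 3 * N ^ 2 := by positivity
      have : s * N ^ 2 * (s ^ 3 * N ^ 2) ≤ 400 * T1 ^ 2 * (s ^ 3 * N ^ 2) := by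
        nlinarith [hc1, hc2, mul_nonneg (mul_nonneg (sq_nonneg T1) (pow_nonneg hs.le 3)) (sq_nonneg N)]
      exact le_of_mul_le_mul_right this hpos
    -- conclude sqrt s * N ≤ 20 T1
    have hsq : (Real.sqrt s * N) ^ 2 ≤ (20 * T1) ^ 2 := by
      rw [mul_pow, Real.sq_sqrt hs0]
      nlinarith [hdiv]
    calc Real.sqrt s * N = Real.sqrt ((Real.sqrt s * N) ^ 2) := by
          rw [Real.sqrt_sq (by positivity)]
      _ ≤ Real.sqrt ((20 * T1) ^ 2) := Real.sqrt_le_sqrt hsq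
      _ = 20 * T1 := Real.sqrt_sq (by positivity)

end Stmt15Aux


theorem stmt15 (n : ℕ) (a : Fin n → ℝ) :
    bExp n (fun x => (∑ i, a i * bval (x i)) *
      Set.indicator {x : Fin n → Bool | 0 ≤ ∑ i, a i * bval (x i)} 1 x) ≥
      Real.sqrt (∑ i, (a i) ^ 2) / 40 := by
  classical
  have hpt : ∀ x : Fin n → Bool,
      (∑ i, a i * bval (x i)) *
        Set.indicator {x : Fin n → Bool | 0 ≤ ∑ i, a i * bval (x i)} 1 x
        = (|Stmt15Aux.L n a x| + Stmt15Aux.L n a x) / 2 := by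
    intro x
    by_cases h : 0 ≤ ∑ i, a i * bval (x i)
    · rw [Set.indicator_of_mem (show x ∈ _ from h), Pi.one_apply, mul_one,
        show Stmt15Aux.L n a x = ∑ i, a i * bval (x i) from rfl, abs_of_nonneg h]
      ring
    · rw [Set.indicator_of_notMem (show x ∉ _ from h), mul_zero,
        show Stmt15Aux.L n a x = ∑ i, a i * bval (x i) from rfl,
        abs_of_neg (lt_of_not_ge h)]
      ring
  rw [bExp]
  simp_rw [hpt]
  have hsum : ∑ x : Fin n → Bool, (|Stmt15Aux.L n a x| + Stmt15Aux.L n a x) / 2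
      = (∑ x : Fin n → Bool, |Stmt15Aux.L n a x|) / 2 := by
    rw [← Finset.sum_div, Finset.sum_add_distrib, Stmt15Aux.M1, add_zero]
  rw [hsum]
  have hkey := Stmt15Aux.key n a
  rw [ge_iff_le, div_div, div_le_div_iff₀ (by norm_num) (by positivity)]
  linarith [hkey]
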